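/- arXiv:1812.03016 — 2 statements merged into one kernel-verified Lean document; each statement's English description precedes it below -/
import Mathlib

section
/- Let X ⊆ ℝ² be a set such that for every m ≥ 1 there exists a cover of X by b_m squares of side length l_m, where b_m = ∏_{i=1}^m (4k^i - 4) and l_m = ∏_{i=1}^m k^{-i} for some fixed integer k ≥ 3. Then the Hausdorff dimension of X is at most 1. -/
open Finset MeasureTheory
open Filter Topology ENNReal NNReal

/-!
A cover by `N m` sets of diameter at most `r m → 0` gives `μH[d] X ≤ liminf N m * r m ^ d`.
For the carpet covers and `d > 1`, `b m * l m ^ d ≤ ∏_{i ≤ m} 4 (k ^ (1 - d)) ^ i`, a product whose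
consecutive ratios `4 (k ^ (1 - d)) ^ (m + 1)` tend to `0`; by the ratio test it tends to `0`, so
`μH[d] X = 0` for every `d > 1`.
-/

section Covers

variable {X : Type*} [EMetricSpace X] [MeasurableSpace X] [BorelSpace X]

theorem hausdorffMeasure_le_liminf_card_mul_rpow {s : Set X} {d : ℝ} (hd : 0 ≤ d)
    {N : ℕ → ℕ} {r : ℕ → ℝ≥0∞} (hr : Tendsto r atTop (𝓝 0))
    (hcov : ∀ᶠ m in atTop, ∃ t : Fin (N m) → Set X,
      s ⊆ ⋃ i, t i ∧ ∀ i, Metric.ediam (t i) ≤ r m) :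
    μH[d] s ≤ liminf (fun m => N m * r m ^ d) atTop := by
  let t m := Classical.epsilon fun t : Fin (N m) → Set X =>
    s ⊆ ⋃ i, t i ∧ ∀ i, Metric.ediam (t i) ≤ r m
  have ht : ∀ᶠ m in atTop, s ⊆ ⋃ i, t m i ∧ ∀ i, Metric.ediam (t m i) ≤ r m :=
    hcov.mono fun _ hm => Classical.epsilon_spec hm
  refine (Measure.hausdorffMeasure_le_liminf_sum d s r hr t
    (ht.mono fun _ h => h.2) (ht.mono fun _ h => h.1)).trans (liminf_le_liminf ?_)
  filter_upwards [ht] with m hm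
  simpa using sum_le_card_nsmul univ _ _ fun i _ => rpow_le_rpow (hm.2 i) hd

theorem dimH_le_of_covers {s : Set X} {d₀ : ℝ≥0} {N : ℕ → ℕ} {r : ℕ → ℝ≥0∞}
    (hr : Tendsto r atTop (𝓝 0))
    (hcov : ∀ᶠ m in atTop, ∃ t : Fin (N m) → Set X,
      s ⊆ ⋃ i, t i ∧ ∀ i, Metric.ediam (t i) ≤ r m)
    (hN : ∀ d : ℝ≥0, d₀ < d → Tendsto (fun m => N m * r m ^ (d : ℝ)) atTop (𝓝 0)) :
    dimH s ≤ d₀ := by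
  refine dimH_le fun d hd => ?_
  by_contra! hlt
  have hzero : μH[d] s = 0 := by
    simpa [(hN d (by exact_mod_cast hlt)).liminf_eq] using
      hausdorffMeasure_le_liminf_card_mul_rpow d.coe_nonneg hr hcov
  simp [hzero] at hd

end Covers

theorem tendsto_prod_Icc_const_mul_pow_atTop_nhds_zero {C ρ : ℝ} (hC : 0 < C) (hρ₀ : 0 < ρ)
    (hρ₁ : ρ < 1) : Tendsto (fun m => ∏ i ∈ Icc 1 m, C * ρ ^ i) atTop (𝓝 0) := by
  have hpos : ∀ m, 0 < ∏ i ∈ Icc 1 m, C * ρ ^ i := fun m => prod_pos fun i _ => by positivity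
  have hratio : ∀ m, ‖∏ i ∈ Icc 1 (m + 1), C * ρ ^ i‖ / ‖∏ i ∈ Icc 1 m, C * ρ ^ i‖
      = C * ρ * ρ ^ m := by
    intro m
    rw [Real.norm_of_nonneg (hpos _).le, Real.norm_of_nonneg (hpos _).le,
      prod_Icc_succ_top (by omega), mul_div_cancel_left₀ _ (hpos m).ne', pow_succ']
    ring
  refine (summable_of_ratio_test_tendsto_lt_one zero_lt_one
    (Eventually.of_forall fun m => (hpos m).ne') ?_).tendsto_atTop_zero
  simp only [hratio]
  simpa using (tendsto_pow_atTop_nhds_zero_of_lt_one hρ₀.le hρ₁).const_mul (C * ρ)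

theorem natCast_prod_four_mul_pow_sub_four_mul_rpow_le {k : ℕ} (hk : 0 < k) (d : ℝ) (m : ℕ) :
    ((∏ i ∈ Icc 1 m, (4 * k ^ i - 4) : ℕ) : ℝ) * (∏ i ∈ Icc 1 m, ((k : ℝ) ^ i)⁻¹) ^ d ≤
      ∏ i ∈ Icc 1 m, 4 * ((k : ℝ) ^ (1 - d)) ^ i := by
  have hk' : (0 : ℝ) < k := by exact_mod_cast hk
  rw [← Real.finsetProd_rpow _ _ (fun i _ => by positivity), Nat.cast_prod, ← prod_mul_distrib]
  refine prod_le_prod (fun i _ => by positivity) fun i _ => ?_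
  have hfactor : (4 : ℝ) * ((k : ℝ) ^ (1 - d)) ^ i = 4 * k ^ i * (((k : ℝ) ^ i)⁻¹) ^ d := by
    rw [Real.rpow_pow_comm hk'.le, Real.rpow_sub (by positivity), Real.rpow_one,
      Real.inv_rpow (by positivity), div_eq_mul_inv, mul_assoc]
  rw [hfactor]
  gcongr
  exact_mod_cast Nat.sub_le _ _

theorem tendsto_natCast_prod_four_mul_pow_sub_four_mul_rpow {k : ℕ} (hk : 1 < k) {d : ℝ}
    (hd : 1 < d) :
    Tendsto (fun m => ((∏ i ∈ Icc 1 m, (4 * k ^ i - 4) : ℕ) : ℝ) *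
      (∏ i ∈ Icc 1 m, ((k : ℝ) ^ i)⁻¹) ^ d) atTop (𝓝 0) := by
  have hk' : (1 : ℝ) < k := by exact_mod_cast hk
  refine squeeze_zero (fun m => by positivity)
    (natCast_prod_four_mul_pow_sub_four_mul_rpow_le (by omega) d)
    (tendsto_prod_Icc_const_mul_pow_atTop_nhds_zero four_pos (by positivity)
      (Real.rpow_lt_one_of_one_lt_of_neg hk' (by linarith)))

/-- if X ⊆ ℝ² can be covered, for every m ≥ 1, by
b_m = ∏_{i=1}^m (4k^i - 4) sets of diameter at most √2 · l_m, where
l_m = ∏_{i=1}^m k^{-i} and k ≥ 3, then dim_H X ≤ 1. -/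
theorem carpet_cover_dimH_le_one (k : ℕ) (hk : 3 ≤ k) (X : Set (ℝ × ℝ))
    (b : ℕ → ℕ) (l : ℕ → ℝ)
    (hb : ∀ m, b m = ∏ i ∈ Finset.Icc 1 m, (4 * k ^ i - 4))
    (hl : ∀ m, l m = ∏ i ∈ Finset.Icc 1 m, ((k : ℝ) ^ i)⁻¹)
    (hcov : ∀ m, 1 ≤ m → ∃ c : Fin (b m) → Set (ℝ × ℝ),
      X ⊆ ⋃ i, c i ∧
      ∀ i, EMetric.diam (c i) ≤ ENNReal.ofReal (Real.sqrt 2 * l m)) :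
    dimH X ≤ 1 := by
  have hk₁ : (1 : ℝ) < k := by exact_mod_cast (by omega : 1 < k)
  have hl_nonneg : ∀ m, 0 ≤ l m := fun m => by rw [hl]; positivity
  have hl_tendsto : Tendsto l atTop (𝓝 0) := by
    have hl_eq : l = fun m => ∏ i ∈ Icc 1 m, 1 * ((k : ℝ)⁻¹) ^ i :=
      funext fun m => by simp only [hl, one_mul, inv_pow]
    exact hl_eq ▸ tendsto_prod_Icc_const_mul_pow_atTop_nhds_zero one_pos
      (inv_pos.2 (by positivity)) (inv_lt_one_of_one_lt₀ hk₁)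
  refine dimH_le_of_covers (N := b) (r := fun m => ENNReal.ofReal (√2 * l m))
    (by simpa using ENNReal.tendsto_ofReal (hl_tendsto.const_mul √2))
    (eventually_atTop.2 ⟨1, hcov⟩) fun d hd => ?_
  have hd₀ : (0 : ℝ) ≤ d := d.coe_nonneg
  have hofReal : ∀ m, (b m : ℝ≥0∞) * ENNReal.ofReal (√2 * l m) ^ (d : ℝ) =
      ENNReal.ofReal (√2 ^ (d : ℝ) * (b m * l m ^ (d : ℝ))) := fun m => by
    rw [ENNReal.ofReal_rpow_of_nonneg (mul_nonneg (by positivity) (hl_nonneg m)) hd₀,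
      Real.mul_rpow (by positivity) (hl_nonneg m), ENNReal.ofReal_mul (by positivity),
      ENNReal.ofReal_mul (by positivity), ENNReal.ofReal_mul (Nat.cast_nonneg (b m)),
      ENNReal.ofReal_natCast]
    ring
  simp_rw [hofReal, hb, hl]
  simpa using ENNReal.tendsto_ofReal
    ((tendsto_natCast_prod_four_mul_pow_sub_four_mul_rpow (by omega : 1 < k) hd).const_mul
      (√2 ^ (d : ℝ)))
end

section
/- Let g : W → ℂ be holomorphic on an open neighborhood W of the unit circle ∂𝔻, with g(∂𝔻) ⊆ ∂𝔻 and g|_{∂𝔻} a covering map of degree d ≥ 2. Then g has no irrationally indifferent fixed point on ∂𝔻: every fixed point of g on ∂𝔻 either has multiplier of modulus ≠ 1 or is parabolic (multiplier a root of unity). -/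
open Set

/-- let g be holomorphic on an open neighborhood W of the unit
circle, mapping the circle onto itself as a covering of degree d ≥ 2. Then g has
no irrationally indifferent fixed point on the circle: every fixed point z₀ of g
on the circle with |g'(z₀)| = 1 has multiplier a root of unity (parabolic). -/
theorem no_irrationally_indifferent_fixed_point_on_circle
    (W : Set ℂ) (hW : IsOpen W) (hWc : Metric.sphere (0 : ℂ) 1 ⊆ W)
    (g : ℂ → ℂ) (hg : AnalyticOn ℂ g W) (d : ℕ) (hd : 2 ≤ d)
    (hmaps : Set.MapsTo g (Metric.sphere (0 : ℂ) 1) (Metric.sphere (0 : ℂ) 1))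
    (hcov : ∀ w ∈ Metric.sphere (0 : ℂ) 1,
      Set.ncard {z ∈ Metric.sphere (0 : ℂ) 1 | g z = w} = d) :
    ∀ z₀ ∈ Metric.sphere (0 : ℂ) 1, g z₀ = z₀ → ‖deriv g z₀‖ = 1 →
      ∃ n : ℕ, 0 < n ∧ (deriv g z₀) ^ n = 1 := by
  intro z₀ hz₀ hfix hnorm
  have hzW : z₀ ∈ W := hWc hz₀
  have hz₀norm : ‖z₀‖ = 1 := by simpa using hz₀
  set a := deriv g z₀ with ha
  -- g is differentiable at z₀ with derivative a
  have hdiff : HasDerivAt g a z₀ := by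
    have h1 : AnalyticAt ℂ g z₀ := ((hW.analyticOn_iff_analyticOnNhd).mp hg) z₀ hzW
    exact h1.differentiableAt.hasDerivAt
  -- the curve c t = exp(t i) z₀ on the circle
  set c : ℝ → ℂ := fun t => Complex.exp (t * Complex.I) * z₀ with hcdef
  have hc0 : c 0 = z₀ := by simp [hcdef]
  have hcderiv : HasDerivAt c (Complex.I * z₀) 0 := by
    have h1 : HasDerivAt (fun t : ℝ => (t : ℂ) * Complex.I) Complex.I 0 := by
      simpa using (Complex.ofRealCLM.hasDerivAt (x := (0 : ℝ))).mul_const Complex.I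
    have h2 := (h1.cexp).mul_const z₀
    simpa [hcdef] using h2
  -- the curve stays on the circle
  have hcs : ∀ t : ℝ, c t ∈ Metric.sphere (0 : ℂ) 1 := by
    intro t
    simp [hcdef, mem_sphere_iff_norm, Complex.norm_exp, hz₀norm]
  -- derivative of g ∘ c at 0
  have hfc : HasDerivAt (fun t => g (c t)) (a * (Complex.I * z₀)) 0 := by
    have := HasDerivAt.comp (0 : ℝ) (hc0 ▸ hdiff) hcderiv
    exact this
  have hstar : HasDerivAt (fun t => star (g (c t))) (star (a * (Complex.I * z₀))) 0 :=
    hfc.star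
  have hu : HasDerivAt (fun t => g (c t) * star (g (c t)))
      (a * (Complex.I * z₀) * star (g (c 0)) + g (c 0) * star (a * (Complex.I * z₀))) 0 :=
    hfc.mul hstar
  -- the product is constantly 1
  have hconst : (fun t => g (c t) * star (g (c t))) = fun _ : ℝ => (1 : ℂ) := by
    funext t
    have h1 : ‖g (c t)‖ = 1 := by simpa using hmaps (hcs t)
    have := Complex.mul_conj (g (c t))
    rw [Complex.star_def, this, Complex.normSq_eq_norm_sq]
    simp [h1]
  have hzero : a * (Complex.I * z₀) * star (g (c 0)) + g (c 0) * star (a * (Complex.I * z₀)) = 0 := by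
    have h2 : HasDerivAt (fun _ : ℝ => (1 : ℂ)) 0 0 := hasDerivAt_const 0 1
    exact (hconst ▸ hu).unique h2
  -- simplify: (a - conj a) * I = 0
  have hz1 : z₀ * star z₀ = 1 := by
    have := Complex.mul_conj z₀
    rw [Complex.star_def, this, Complex.normSq_eq_norm_sq]
    simp [hz₀norm]
  rw [hc0, hfix] at hzero
  have hkey : a = star a := by
    have : (a - star a) * (Complex.I * (z₀ * star z₀)) = 0 := by
      rw [← hzero]; push_cast [star_mul, Complex.star_def, map_mul, Complex.conj_I]; ring_nf
    rw [hz1, mul_one] at this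
    rcases mul_eq_zero.mp this with h | h
    · exact sub_eq_zero.mp h
    · exact absurd h Complex.I_ne_zero
  refine ⟨2, by norm_num, ?_⟩
  have : a * star a = 1 := by
    have := Complex.mul_conj a
    rw [Complex.star_def, this, Complex.normSq_eq_norm_sq]
    simp [hnorm]
  calc a ^ 2 = a * a := sq a
    _ = a * star a := by rw [← hkey]
    _ = 1 := this
end
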